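/- arXiv:1109.1494 — 5 statements merged into one kernel-verified Lean document; each statement's English description precedes it below -/
import Mathlib

section
/- Let P and T be integer strings of length m with m ≥ 2, and define the difference strings P_δ[j] = P[j+1] - P[j] and T_δ[j] = T[j+1] - T[j] for j ∈ {0,...,m-2}. If there exists an integer α such that the number of positions j ∈ {0,...,m-1} with α + P[j] ≠ T[j] is at most k, then the number of positions j ∈ {0,...,m-2} with P_δ[j] ≠ T_δ[j] is at most 2k. -/
open Finset

theorem add_ne_or_add_ne_of_sub_ne_sub {G : Type*} [AddCommGroup G] {a x x' y y' : G}
    (h : x' - x ≠ y' - y) : a + x' ≠ y' ∨ a + x ≠ y := by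
  contrapose! h
  rw [← h.1, ← h.2, add_sub_add_left_eq_sub]

theorem card_filter_le_two_mul_card_filter {ι κ : Type*} [Fintype ι] [Fintype κ]
    {p : ι → Prop} {q : κ → Prop} [DecidablePred p] [DecidablePred q]
    {e₁ e₂ : ι → κ} (he₁ : e₁.Injective) (he₂ : e₂.Injective)
    (hpq : ∀ i, p i → q (e₁ i) ∨ q (e₂ i)) :
    #{i | p i} ≤ 2 * #{j | q j} := by
  classical
  have card_preimage_le {e : ι → κ} (he : e.Injective) : #{i | q (e i)} ≤ #{j | q j} :=
    card_le_card_of_injOn e (fun i hi => by simpa using hi) he.injOn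
  calc #{i | p i} ≤ #(({i | q (e₁ i)} : Finset ι) ∪ ({i | q (e₂ i)} : Finset ι)) :=
        card_le_card fun i hi => by simpa using hpq i (by simpa using hi)
    _ ≤ #{i | q (e₁ i)} + #{i | q (e₂ i)} := card_union_le _ _
    _ ≤ #{j | q j} + #{j | q j} := add_le_add (card_preimage_le he₁) (card_preimage_le he₂)
    _ = 2 * #{j | q j} := (two_mul _).symm

/-- If the shift-normalised Hamming distance of `P` and `T` is at most `k`, then the
difference strings have Hamming distance at most `2k`. -/
theorem stmt_1 (m k : ℕ) (P T : Fin m → ℤ)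
    (h : ∃ α : ℤ, (Finset.univ.filter (fun j : Fin m => α + P j ≠ T j)).card ≤ k) :
    (Finset.univ.filter (fun j : Fin (m - 1) =>
        P ⟨j.1 + 1, by have := j.2; omega⟩ - P ⟨j.1, by have := j.2; omega⟩ ≠
        T ⟨j.1 + 1, by have := j.2; omega⟩ - T ⟨j.1, by have := j.2; omega⟩)).card ≤ 2 * k := by
  obtain ⟨α, hα⟩ := h
  refine le_trans ?_ (Nat.mul_le_mul_left 2 hα)
  refine card_filter_le_two_mul_card_filter
    (e₁ := fun j : Fin (m - 1) => (⟨j.1 + 1, by omega⟩ : Fin m))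
    (e₂ := fun j => ⟨j.1, by omega⟩) ?_ ?_ fun j hj => add_ne_or_add_ne_of_sub_ne_sub hj
  all_goals intro i j hij; simpa [Fin.ext_iff] using hij
end

section
/- Let π be any permutation of {0,...,m-1} and let k be an integer with 6 ≤ k < m/4. Then there exist integer strings P and T of length m such that for every integer α, |{j : α + P[j] ≠ T[j]}| > k, yet |{j : P[π(j)] - P[j] ≠ T[π(j)] - T[j]}| ≤ 2k. -/
/-!
Take `P = 0` and let `T` be the indicator of a set `B` of `k + 1` positions containing both
`j₀` and `π j₀`. A shift `α` of `P` mismatches `T` on all of `B` (if `α ≠ 1`) or on all of its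
complement (if `α = 1`), hence in more than `k` places. The difference strings disagree exactly
where one of `j`, `π j` lies in `B` and the other does not; those `j` lie in `B \ {j₀}` or are
sent by `π` into `B \ {π j₀}`, so there are at most `2k` of them.
-/

open Finset

variable {ι : Type*} [Fintype ι] [DecidableEq ι]

lemma min_card_le_card_filter_ne_indicator (B : Finset ι) (α : ℤ) :
    min #B #Bᶜ ≤ #{j | α ≠ (B : Set ι).indicator 1 j} := by
  by_cases hα : α = 1
  · refine (min_le_right _ _).trans (card_le_card fun j hj => ?_)
    have hjB : j ∉ (B : Set ι) := by simpa using hj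
    simp [Set.indicator_of_notMem hjB, hα]
  · refine (min_le_left _ _).trans (card_le_card fun j hj => ?_)
    have hjB : j ∈ (B : Set ι) := by simpa using hj
    simp [Set.indicator_of_mem hjB, hα]

lemma card_filter_not_iff_apply_mem_le (σ : Equiv.Perm ι) {B : Finset ι} {j₀ : ι}
    (h₀ : j₀ ∈ B) (h₁ : σ j₀ ∈ B) :
    #{j | ¬(j ∈ B ↔ σ j ∈ B)} ≤ 2 * (#B - 1) := by
  have hsub : univ.filter (fun j => ¬(j ∈ B ↔ σ j ∈ B)) ⊆
      B.erase j₀ ∪ (B.erase (σ j₀)).map σ.symm.toEmbedding := by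
    intro j hj
    simp only [mem_filter, mem_univ, true_and] at hj
    by_cases hjB : j ∈ B
    · refine mem_union_left _ (mem_erase.2 ⟨?_, hjB⟩)
      rintro rfl
      exact hj ⟨fun _ => h₁, fun _ => h₀⟩
    · have hσj : σ j ∈ B := by tauto
      refine mem_union_right _ (mem_map.2 ⟨σ j, mem_erase.2 ⟨?_, hσj⟩, by simp⟩)
      rintro h
      exact hjB (σ.injective h ▸ h₀)
  calc #{j | ¬(j ∈ B ↔ σ j ∈ B)}
      ≤ #(B.erase j₀) + #((B.erase (σ j₀)).map σ.symm.toEmbedding) :=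
        (card_le_card hsub).trans (card_union_le _ _)
    _ = 2 * (#B - 1) := by
        rw [card_map, card_erase_of_mem h₀, card_erase_of_mem h₁]
        ring

lemma filter_indicator_sub_ne_eq (σ : Equiv.Perm ι) (B : Finset ι) (c : ℤ) :
    univ.filter (fun j => c - c ≠ (B : Set ι).indicator 1 (σ j) - (B : Set ι).indicator 1 j) =
      univ.filter (fun j => ¬(j ∈ B ↔ σ j ∈ B)) := by
  ext j
  by_cases hj : j ∈ B <;> by_cases hσj : σ j ∈ B <;> simp [hj, hσj]

/-- For any permutation `π` and any `k` with `6 ≤ k < m/4`, there are strings `P`, `T`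
whose shift-normalised Hamming distance exceeds `k` while the permuted difference strings
have Hamming distance at most `2k`. -/
theorem stmt_5 (m k : ℕ) (hk : 6 ≤ k) (hm : 4 * k < m) (π : Equiv.Perm (Fin m)) :
    ∃ P T : Fin m → ℤ,
      (∀ α : ℤ, k < (Finset.univ.filter (fun j : Fin m => α + P j ≠ T j)).card) ∧
      (Finset.univ.filter (fun j : Fin m =>
          P (π j) - P j ≠ T (π j) - T j)).card ≤ 2 * k := by
  let j₀ : Fin m := ⟨0, by omega⟩
  have hpair : #{j₀, π j₀} ≤ k + 1 := (card_le_two).trans (by omega)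
  obtain ⟨B, hB, hBcard⟩ := exists_superset_card_eq hpair (by rw [Fintype.card_fin]; omega)
  refine ⟨fun _ => 0, (B : Set (Fin m)).indicator 1, fun α => ?_, ?_⟩
  · have hcompl : #Bᶜ = m - (k + 1) := by rw [card_compl, hBcard, Fintype.card_fin]
    have := min_card_le_card_filter_ne_indicator B α
    simp only [add_zero]
    omega
  · have := card_filter_not_iff_apply_mem_le π (j₀ := j₀) (hB (by simp)) (hB (by simp))
    beta_reduce
    rw [filter_indicator_sub_ne_eq]
    omega
end

section
/- Let S be a finite set of positive integers of size s, sorted as x₁ < x₂ < ... < x_s, and construct the text T = 0^s · x₁x₂···x_s · y₁y₂···y_s · x₁x₂···x_s · y_{s+1}···y_{2s} of length 5s and pattern P = x_s x_{s-1} ··· x₁ · 0^s · 0^s of length 3s, where y_i = 2x_s + i. Then there exist a, b, c ∈ S with a + b = c if and only if there exists an alignment i ∈ {0,...,2s} and an integer α such that α + P[j] = T[i+j] for at least 2 positions j ∈ {0,...,3s-1}. -/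
/-!
Two matches of a common shift `α` cannot both lie in the reversed block `x_{s-1} … x₀` of the
pattern, because the text is nondecreasing on its first `3s` letters. Nor can both lie in the zero
blocks: within distance `< 2s` the text repeats no value beyond its initial zeros, since the two
copies of `x` are exactly `2s` apart and the `y`'s are distinct and exceed every `x`. So a pattern
zero meets a letter `α` of the text and a letter `x_a` meets `α + x_a` further left. If `α` were a
`y`, everything left of it in the first `3s` letters would be smaller; so `α = x_b`, and
`0 < x_a + x_b < y₁` forces `α + x_a` to be some `x_c`. Conversely, `x_a + x_b = x_c` is seen by
aligning `x_a` in the pattern with `x_c` in the first copy of `x`: the shift `x_b` then also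
matches a pattern zero with `x_b` in the second copy.
-/

open Finset

/-- The last block is unbounded, which spares upper bounds on positions. -/
def threeSumText (s : ℕ) (x y : ℕ → ℤ) (j : ℕ) : ℤ :=
  if j < s then 0
  else if j < 2 * s then x (j - s)
  else if j < 3 * s then y (j - 2 * s + 1)
  else if j < 4 * s then x (j - 3 * s)
  else y (j - 3 * s + 1)

def threeSumPattern (s : ℕ) (x : ℕ → ℤ) (j : ℕ) : ℤ :=
  if j < s then x (s - 1 - j) else 0

structure ThreeSumInput (s : ℕ) (x y : ℕ → ℤ) : Prop where
  strictMonoOn : StrictMonoOn x (Set.Iio s)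
  pos : ∀ a, a < s → 0 < x a
  strictMono_y : StrictMono y
  add_lt_y_one : ∀ a b, a < s → b < s → x a + x b < y 1

section

variable {s : ℕ} {x y : ℕ → ℤ} {p q : ℕ}

theorem threeSumPattern_of_lt {j : ℕ} (h : j < s) : threeSumPattern s x j = x (s - 1 - j) :=
  if_pos h

theorem threeSumPattern_of_le {j : ℕ} (h : s ≤ j) : threeSumPattern s x j = 0 :=
  if_neg (not_lt.2 h)

theorem threeSumText_zeroBlock (h : p < s) : threeSumText s x y p = 0 :=
  if_pos h

theorem threeSumText_xBlock₁ (h₁ : s ≤ p) (h₂ : p < 2 * s) :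
    threeSumText s x y p = x (p - s) := by
  rw [threeSumText, if_neg (by omega), if_pos h₂]

theorem threeSumText_yBlock₁ (h₁ : 2 * s ≤ p) (h₂ : p < 3 * s) :
    threeSumText s x y p = y (p - 2 * s + 1) := by
  rw [threeSumText, if_neg (by omega), if_neg (by omega), if_pos h₂]

theorem threeSumText_xBlock₂ (h₁ : 3 * s ≤ p) (h₂ : p < 4 * s) :
    threeSumText s x y p = x (p - 3 * s) := by
  rw [threeSumText, if_neg (by omega), if_neg (by omega), if_neg (by omega), if_pos h₂]

theorem threeSumText_yBlock₂ (h : 4 * s ≤ p) : threeSumText s x y p = y (p - 3 * s + 1) := by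
  rw [threeSumText, if_neg (by omega), if_neg (by omega), if_neg (by omega), if_neg (by omega)]

namespace ThreeSumInput

theorem x_lt_y (h : ThreeSumInput s x y) {a m : ℕ} (ha : a < s) (hm : 1 ≤ m) : x a < y m := by
  have := h.add_lt_y_one a a ha ha
  have := h.pos a ha
  have := h.strictMono_y.monotone hm
  linarith

theorem threeSumText_pos (h : ThreeSumInput s x y) (hs : 0 < s) (hq : s ≤ q) :
    0 < threeSumText s x y q := by
  have hy : ∀ m, 1 ≤ m → 0 < y m := fun m hm => (h.pos 0 hs).trans (h.x_lt_y hs hm)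
  by_cases hq₂ : q < 2 * s
  · rw [threeSumText_xBlock₁ hq hq₂]; exact h.pos _ (by omega)
  by_cases hq₃ : q < 3 * s
  · rw [threeSumText_yBlock₁ (by omega) hq₃]; exact hy _ (by omega)
  by_cases hq₄ : q < 4 * s
  · rw [threeSumText_xBlock₂ (by omega) hq₄]; exact h.pos _ (by omega)
  · rw [threeSumText_yBlock₂ (by omega)]; exact hy _ (by omega)

theorem strictMonoOn_threeSumText_left (h : ThreeSumInput s x y) :
    StrictMonoOn (threeSumText s x y) (Set.Ico s (3 * s)) := by
  rintro p ⟨hp₁, hp₂⟩ q ⟨hq₁, hq₂⟩ hpq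
  by_cases hq : q < 2 * s
  · rw [threeSumText_xBlock₁ hp₁ (by omega), threeSumText_xBlock₁ hq₁ hq]
    exact h.strictMonoOn (Set.mem_Iio.2 (by omega)) (Set.mem_Iio.2 (by omega)) (by omega)
  rw [threeSumText_yBlock₁ (by omega) hq₂]
  by_cases hp : p < 2 * s
  · rw [threeSumText_xBlock₁ hp₁ hp]; exact h.x_lt_y (by omega) (by omega)
  · rw [threeSumText_yBlock₁ (by omega) hp₂]; exact h.strictMono_y (by omega)

theorem strictMonoOn_threeSumText_right (h : ThreeSumInput s x y) :
    StrictMonoOn (threeSumText s x y) (Set.Ici (3 * s)) := by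
  rintro p hp₁ q hq₁ hpq
  rw [Set.mem_Ici] at hp₁ hq₁
  by_cases hq : q < 4 * s
  · rw [threeSumText_xBlock₂ hp₁ (by omega), threeSumText_xBlock₂ hq₁ hq]
    exact h.strictMonoOn (Set.mem_Iio.2 (by omega)) (Set.mem_Iio.2 (by omega)) (by omega)
  rw [threeSumText_yBlock₂ (p := q) (by omega)]
  by_cases hp : p < 4 * s
  · rw [threeSumText_xBlock₂ hp₁ hp]; exact h.x_lt_y (by omega) (by omega)
  · rw [threeSumText_yBlock₂ (by omega)]; exact h.strictMono_y (by omega)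

theorem monotoneOn_threeSumText (h : ThreeSumInput s x y) :
    MonotoneOn (threeSumText s x y) (Set.Iio (3 * s)) := by
  intro p hp q hq hpq
  rw [Set.mem_Iio] at hp hq
  rcases hpq.lt_or_eq with hpq | rfl
  · by_cases hps : p < s
    · rw [threeSumText_zeroBlock hps]
      by_cases hqs : q < s
      · rw [threeSumText_zeroBlock hqs]
      · exact (h.threeSumText_pos (by omega) (by omega)).le
    · exact (h.strictMonoOn_threeSumText_left ⟨by omega, hp⟩ ⟨by omega, hq⟩ hpq).le
  · rfl

theorem threeSumText_le_y (h : ThreeSumInput s x y) (hp : p < 3 * s) :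
    threeSumText s x y p ≤ y s := by
  have hlast : threeSumText s x y (3 * s - 1) = y s := by
    rw [threeSumText_yBlock₁ (by omega) (by omega)]; congr 1; omega
  exact hlast ▸ h.monotoneOn_threeSumText hp (Set.mem_Iio.2 (by omega)) (by omega)

theorem threeSumText_ne_of_lt_add_two_mul (h : ThreeSumInput s x y) (hps : s ≤ p) (hpq : p < q)
    (hqp : q < p + 2 * s) : threeSumText s x y p ≠ threeSumText s x y q := by
  intro heq
  by_cases hq₃ : q < 3 * s
  · exact (h.strictMonoOn_threeSumText_left ⟨hps, by omega⟩ ⟨by omega, hq₃⟩ hpq).ne heq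
  by_cases hp₃ : 3 * s ≤ p
  · exact (h.strictMonoOn_threeSumText_right hp₃ (Set.mem_Ici.2 (by omega)) hpq).ne heq
  by_cases hq₄ : q < 4 * s
  · rw [threeSumText_xBlock₂ (by omega) hq₄] at heq
    by_cases hp₂ : p < 2 * s
    · rw [threeSumText_xBlock₁ hps hp₂] at heq
      have := h.strictMonoOn.injOn (Set.mem_Iio.2 (by omega)) (Set.mem_Iio.2 (by omega)) heq
      omega
    · rw [threeSumText_yBlock₁ (by omega) (by omega)] at heq
      exact (h.x_lt_y (by omega) (by omega)).ne' heq
  · rw [threeSumText_yBlock₂ (p := q) (by omega)] at heq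
    exact ((h.threeSumText_le_y (p := p) (by omega)).trans_lt (h.strictMono_y (by omega))).ne heq

theorem threeSumText_trichotomy (h : ThreeSumInput s x y) (hp : p < 3 * s) :
    threeSumText s x y p = 0 ∨ (∃ c, c < s ∧ threeSumText s x y p = x c) ∨
      y 1 ≤ threeSumText s x y p := by
  by_cases hp₁ : p < s
  · exact .inl (threeSumText_zeroBlock hp₁)
  by_cases hp₂ : p < 2 * s
  · exact .inr (.inl ⟨p - s, by omega, threeSumText_xBlock₁ (by omega) hp₂⟩)
  · rw [threeSumText_yBlock₁ (by omega) hp]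
    exact .inr (.inr (h.strictMono_y.monotone (by omega)))

theorem threeSumText_eq_x_or_lt (h : ThreeSumInput s x y) (hq : s ≤ q) :
    (∃ b, b < s ∧ threeSumText s x y q = x b) ∨
      ∀ p, p < q → p < 3 * s → threeSumText s x y p < threeSumText s x y q := by
  by_cases hq₂ : q < 2 * s
  · exact .inl ⟨q - s, by omega, threeSumText_xBlock₁ hq hq₂⟩
  by_cases hq₄ : 3 * s ≤ q ∧ q < 4 * s
  · exact .inl ⟨q - 3 * s, by omega, threeSumText_xBlock₂ hq₄.1 hq₄.2⟩
  refine .inr fun p hpq hp => ?_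
  by_cases hq₃ : q < 3 * s
  · by_cases hps : p < s
    · rw [threeSumText_zeroBlock hps]; exact h.threeSumText_pos (by omega) hq
    · exact h.strictMonoOn_threeSumText_left ⟨by omega, hp⟩ ⟨hq, hq₃⟩ hpq
  · rw [threeSumText_yBlock₂ (p := q) (by omega)]
    exact (h.threeSumText_le_y hp).trans_lt (h.strictMono_y (by omega))

theorem exists_add_eq_of_threeSumText_eq_add (h : ThreeSumInput s x y) {a : ℕ} (ha : a < s)
    (hp : p < 3 * s) (hpq : p < q) (hq : s ≤ q)
    (heq : threeSumText s x y p = threeSumText s x y q + x a) :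
    ∃ a b c, a < s ∧ b < s ∧ c < s ∧ x a + x b = x c := by
  have hxa := h.pos a ha
  rcases h.threeSumText_eq_x_or_lt hq with ⟨b, hb, hqb⟩ | hlt
  · have hxb := h.pos b hb
    have hab := h.add_lt_y_one a b ha hb
    rcases h.threeSumText_trichotomy hp with hp0 | ⟨c, hc, hpc⟩ | hpy
    · linarith
    · exact ⟨a, b, c, ha, hb, hc, by linarith⟩
    · linarith
  · linarith [hlt p hpq hp]

theorem exists_add_eq_of_two_matches (h : ThreeSumInput s x y) {i j₁ j₂ : ℕ} {α : ℤ}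
    (hi : i ≤ 2 * s) (hj : j₁ < j₂) (hj₂ : j₂ < 3 * s)
    (h₁ : α + threeSumPattern s x j₁ = threeSumText s x y (i + j₁))
    (h₂ : α + threeSumPattern s x j₂ = threeSumText s x y (i + j₂)) :
    ∃ a b c, a < s ∧ b < s ∧ c < s ∧ x a + x b = x c := by
  rcases lt_or_ge j₂ s with hj₂s | hj₂s
  · rw [threeSumPattern_of_lt (hj.trans hj₂s)] at h₁
    rw [threeSumPattern_of_lt hj₂s] at h₂
    have hpat : x (s - 1 - j₂) < x (s - 1 - j₁) :=
      h.strictMonoOn (Set.mem_Iio.2 (by omega)) (Set.mem_Iio.2 (by omega)) (by omega)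
    have htext := h.monotoneOn_threeSumText (Set.mem_Iio.2 (by omega : i + j₁ < 3 * s))
      (Set.mem_Iio.2 (by omega : i + j₂ < 3 * s)) (by omega)
    linarith
  rw [threeSumPattern_of_le hj₂s, add_zero] at h₂
  rcases lt_or_ge j₁ s with hj₁s | hj₁s
  · rw [threeSumPattern_of_lt hj₁s, h₂] at h₁
    exact h.exists_add_eq_of_threeSumText_eq_add (a := s - 1 - j₁) (p := i + j₁) (q := i + j₂)
      (by omega) (by omega) (by omega) (by omega) (by linarith)
  · rw [threeSumPattern_of_le hj₁s, add_zero, h₂] at h₁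
    exact absurd h₁.symm (h.threeSumText_ne_of_lt_add_two_mul (by omega) (by omega) (by omega))

end ThreeSumInput

/-- Aligning the pattern at `a + c + 1` puts `x_a` over `x_c` and a zero over the second `x_b`. -/
theorem two_le_card_matches_of_add_eq (hx : StrictMonoOn x (Set.Iio s))
    (hxpos : ∀ a, a < s → 0 < x a) {a b c : ℕ} (ha : a < s) (hb : b < s) (hc : c < s)
    (habc : x a + x b = x c) :
    2 ≤ #{j ∈ range (3 * s) |
      x b + threeSumPattern s x j = threeSumText s x y (a + c + 1 + j)} := by
  have hbc : b < c := (hx.lt_iff_lt hb hc).1 (by linarith [hxpos a ha])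
  have hsub : {s - 1 - a, 3 * s + b - (a + c + 1)} ⊆
      {j ∈ range (3 * s) | x b + threeSumPattern s x j = threeSumText s x y (a + c + 1 + j)} := by
    rw [insert_subset_iff, singleton_subset_iff, mem_filter, mem_filter, mem_range, mem_range]
    refine ⟨⟨by omega, ?_⟩, ⟨by omega, ?_⟩⟩
    · rw [threeSumPattern_of_lt (by omega), threeSumText_xBlock₁ (by omega) (by omega)]
      rw [show s - 1 - (s - 1 - a) = a by omega, show a + c + 1 + (s - 1 - a) - s = c by omega]
      linarith
    · rw [threeSumPattern_of_le (by omega), threeSumText_xBlock₂ (by omega) (by omega)]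
      rw [show a + c + 1 + (3 * s + b - (a + c + 1)) - 3 * s = b by omega, add_zero]
  exact (card_pair (by omega)).symm.le.trans (card_le_card hsub)

theorem exists_add_eq_iff_two_le_card_matches (h : ThreeSumInput s x y) :
    (∃ a b c, a < s ∧ b < s ∧ c < s ∧ x a + x b = x c) ↔
      ∃ i, i ≤ 2 * s ∧ ∃ α : ℤ,
        2 ≤ #{j ∈ range (3 * s) | α + threeSumPattern s x j = threeSumText s x y (i + j)} := by
  constructor
  · rintro ⟨a, b, c, ha, hb, hc, habc⟩
    exact ⟨a + c + 1, by omega, x b,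
      two_le_card_matches_of_add_eq h.strictMonoOn h.pos ha hb hc habc⟩
  · rintro ⟨i, hi, α, hcard⟩
    obtain ⟨j₁, hj₁, j₂, hj₂, hne⟩ := one_lt_card.1 hcard
    rw [mem_filter, mem_range] at hj₁ hj₂
    rcases hne.lt_or_gt with hlt | hlt
    · exact h.exists_add_eq_of_two_matches hi hlt hj₂.1 hj₁.2 hj₂.2
    · exact h.exists_add_eq_of_two_matches hi hlt hj₁.1 hj₂.2 hj₁.2

end

theorem stmt_6_general (s : ℕ) (x : ℕ → ℤ)
    (hpos : ∀ i, i < s → 0 < x i)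
    (hmono : ∀ i j, i < j → j < s → x i < x j)
    (y : ℕ → ℤ) (hy : ∀ i, y i = 2 * x (s - 1) + i)
    (T P : ℕ → ℤ)
    (hT : ∀ j, j < 5 * s → T j =
      if j < s then 0
      else if j < 2 * s then x (j - s)
      else if j < 3 * s then y (j - 2 * s + 1)
      else if j < 4 * s then x (j - 3 * s)
      else y (j - 3 * s + 1))
    (hP : ∀ j, j < 3 * s → P j = if j < s then x (s - 1 - j) else 0) :
    (∃ ia ib ic, ia < s ∧ ib < s ∧ ic < s ∧ x ia + x ib = x ic) ↔
      (∃ i, i ≤ 2 * s ∧ ∃ α : ℤ,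
        2 ≤ ((Finset.range (3 * s)).filter (fun j => α + P j = T (i + j))).card) := by
  have hx : StrictMonoOn x (Set.Iio s) := fun a ha b hb hab => hmono a b hab hb
  have hxle : ∀ a, a < s → x a ≤ x (s - 1) := fun a ha =>
    hx.monotoneOn ha (Set.mem_Iio.2 (by omega)) (by omega)
  have hinput : ThreeSumInput s x y :=
    { strictMonoOn := hx
      pos := hpos
      strictMono_y := fun m n hmn => by
        rw [hy, hy]; linarith [(Nat.cast_lt (α := ℤ)).2 hmn]
      add_lt_y_one := fun a b ha hb => by
        rw [hy, Nat.cast_one]; linarith [hxle a ha, hxle b hb] }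
  rw [exists_add_eq_iff_two_le_card_matches hinput]
  refine exists_congr fun i => and_congr_right fun hi => exists_congr fun α => ?_
  suffices hmatch : ∀ j, j < 3 * s →
      (α + P j = T (i + j) ↔ α + threeSumPattern s x j = threeSumText s x y (i + j)) by
    rw [filter_congr fun j hj => hmatch j (mem_range.1 hj)]
  intro j hj
  rw [hP j hj, hT (i + j) (by omega)]
  rfl

/-- 3SUM reduction to shift-normalised Hamming distance: with the text
`T = 0^s ⬝ x₀…x_{s-1} ⬝ y₁…y_s ⬝ x₀…x_{s-1} ⬝ y_{s+1}…y_{2s}` and pattern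
`P = x_{s-1}…x₀ ⬝ 0^s ⬝ 0^s` (where `y_i = 2 x_{s-1} + i`), there are `a, b, c` in the set
with `a + b = c` iff some alignment admits a shift matching at least two positions. -/
theorem stmt_6 (s : ℕ) (hs : 1 ≤ s) (x : ℕ → ℤ)
    (hpos : ∀ i, i < s → 0 < x i)
    (hmono : ∀ i j, i < j → j < s → x i < x j)
    (y : ℕ → ℤ) (hy : ∀ i, y i = 2 * x (s - 1) + i)
    (T P : ℕ → ℤ)
    (hT : ∀ j, j < 5 * s → T j =
      if j < s then 0
      else if j < 2 * s then x (j - s)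
      else if j < 3 * s then y (j - 2 * s + 1)
      else if j < 4 * s then x (j - 3 * s)
      else y (j - 3 * s + 1))
    (hP : ∀ j, j < 3 * s → P j = if j < s then x (s - 1 - j) else 0) :
    (∃ ia ib ic, ia < s ∧ ib < s ∧ ic < s ∧ x ia + x ib = x ic) ↔
      (∃ i, i ≤ 2 * s ∧ ∃ α : ℤ,
        2 ≤ ((Finset.range (3 * s)).filter (fun j => α + P j = T (i + j))).card) :=
  stmt_6_general s x hpos hmono y hy T P hT hP
end

section
/- Let P, T : Fin m → ℤ and let h = min over α ∈ ℤ of |{j : α + P[j] ≠ T[j]}| with h > m/3. Then Σ_{q=1}^{m-1} |{j : P[π_q(j)] - P[j] ≠ T[π_q(j)] - T[j]}| ≥ m²/3 - m, where π_q(j) = j + q mod m. -/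
/-!
Put `D = P - T`. A mismatch of the difference strings at `j` for the shift `q` is exactly
`D (j + q) ≠ D j`, and the shift `α` mismatches at `j` exactly when `D j ≠ -α`. Summing over
all shifts `c` (the trivial shift contributes nothing) and exchanging the order of summation,
the total is `∑ j, #{k | D k ≠ D j}`; each term is the mismatch count of the shift `-D j`, hence
at least `h`. So the total is at least `m * h > m² / 3`.
-/

open Finset
open Fin.NatCast

theorem Finset.sum_card_filter_add_ne_eq_sum_card_filter_ne {G β : Type*} [AddGroup G]
    [Fintype G] [DecidableEq β] (f : G → β) :
    ∑ c : G, #{j | f (j + c) ≠ f j} = ∑ j : G, #{k | f k ≠ f j} := by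
  simp only [card_filter]
  rw [sum_comm]
  exact sum_congr rfl fun j _ => Fintype.sum_equiv (Equiv.addLeft j) _ _ fun _ => rfl

theorem Fin.sum_Icc_one_natCast_eq_sum_univ {M : Type*} [AddCommMonoid M] {m : ℕ} [NeZero m]
    (f : Fin m → M) (hf : f 0 = 0) :
    ∑ q ∈ Icc 1 (m - 1), f (q : Fin m) = ∑ c : Fin m, f c := by
  have hrange : range m = insert 0 (Icc 1 (m - 1)) := by
    ext x
    simp only [mem_range, mem_insert, mem_Icc]
    have := NeZero.pos m
    omega
  calc ∑ q ∈ Icc 1 (m - 1), f (q : Fin m)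
      = ∑ q ∈ range m, f (q : Fin m) := by rw [hrange, sum_insert (by simp), Nat.cast_zero, hf,
          zero_add]
    _ = ∑ c : Fin m, f c := by simp only [← Fin.sum_univ_eq_sum_range, Fin.cast_val_eq_self]

theorem Fin.mk_add_mod_eq_add_natCast {m : ℕ} [NeZero m] (j : Fin m) (q : ℕ) (hm : 0 < m) :
    (⟨(j.1 + q) % m, Nat.mod_lt _ hm⟩ : Fin m) = j + (q : Fin m) := by
  ext
  simp [Fin.add_def]

theorem card_filter_add_ne_eq_card_filter_sub_ne {ι : Type*} [Fintype ι] (P T : ι → ℤ)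
    (α : ℤ) : #{j | α + P j ≠ T j} = #{j | (P - T) j ≠ -α} := by
  congr 1
  exact filter_congr fun j _ => by simp only [Pi.sub_apply]; omega

theorem card_filter_sub_ne_sub_eq {ι : Type*} [Fintype ι] (P T : ι → ℤ) (π : ι → ι) :
    #{j | P (π j) - P j ≠ T (π j) - T j} = #{j | (P - T) (π j) ≠ (P - T) j} := by
  congr 1
  exact filter_congr fun j _ => by rw [Pi.sub_apply, Pi.sub_apply, Ne, Ne, sub_eq_sub_iff_sub_eq_sub]

/-- If the shift-normalised Hamming distance `h` of `P, T` exceeds `m/3`, the total number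
of mismatches of the permuted difference strings, summed over all nontrivial cyclic
permutations, is at least `m²/3 - m`. -/
theorem stmt_13 (m : ℕ) (hm : 0 < m) (P T : Fin m → ℤ) (h : ℕ)
    (hdef : h = sInf {c : ℕ | ∃ α : ℤ,
      c = (Finset.univ.filter (fun j : Fin m => α + P j ≠ T j)).card})
    (hh : (m : ℚ) / 3 < h) :
    (m : ℚ) ^ 2 / 3 - m ≤
      ∑ q ∈ Finset.Icc 1 (m - 1),
        ((Finset.univ.filter (fun j : Fin m =>
          P ⟨(j.1 + q) % m, Nat.mod_lt _ hm⟩ - P j ≠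
          T ⟨(j.1 + q) % m, Nat.mod_lt _ hm⟩ - T j)).card : ℚ) := by
  have : NeZero m := ⟨hm.ne'⟩
  set D := P - T
  have hshift : ∑ q ∈ Icc 1 (m - 1), #{j | P ⟨(j.1 + q) % m, Nat.mod_lt _ hm⟩ - P j ≠
      T ⟨(j.1 + q) % m, Nat.mod_lt _ hm⟩ - T j} = ∑ j : Fin m, #{k | D k ≠ D j} := by
    simp only [Fin.mk_add_mod_eq_add_natCast _ _ hm, card_filter_sub_ne_sub_eq]
    rw [Fin.sum_Icc_one_natCast_eq_sum_univ (fun c => #{j | D (j + c) ≠ D j}) (by simp),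
      sum_card_filter_add_ne_eq_sum_card_filter_ne]
  have hlow : ∀ j : Fin m, h ≤ #{k | D k ≠ D j} := fun j => by
    rw [hdef, ← neg_neg (D j), ← card_filter_add_ne_eq_card_filter_sub_ne]
    exact Nat.sInf_le ⟨-D j, rfl⟩
  have hmh : m * h ≤ ∑ j : Fin m, #{k | D k ≠ D j} := by
    simpa using sum_le_sum fun j (_ : j ∈ univ) => hlow j
  rw [← Nat.cast_sum, hshift]
  have hmh' : (m : ℚ) * h ≤ ((∑ j : Fin m, #{k | D k ≠ D j} : ℕ) : ℚ) := by exact_mod_cast hmh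
  linarith [mul_lt_mul_of_pos_left hh (by exact_mod_cast hm : (0 : ℚ) < m)]
end

section
/- Let P, T : Fin m → ℤ with m > 6k², k ≥ 2. Suppose the shift-normalised Hamming distance h = min_α |{j : α + P[j] ≠ T[j]}| satisfies k < h ≤ 2k. Then for at least (m-1) - (h-1)h of the cyclic permutations π_q (q ∈ {1,...,m-1}), the permuted difference strings satisfy |{j : P[π_q(j)] - P[j] ≠ T[π_q(j)] - T[j]}| ≥ 2h > 2k. -/
/-!
Let `M` be the mismatch set of a shift `α` attaining `h`, and `e j = α + P j - T j`, so that
`M = {j | e j ≠ 0}`. Position `j` is a mismatch of the difference strings under the cyclic shift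
`q` exactly when `e (j + q) ≠ e j`, which holds as soon as exactly one of `j`, `j + q` lies in `M`.
Unless `q` is one of the at most `(h - 1) h` differences `b - a` of distinct `a, b ∈ M`, the shift
moves `M` off itself, so every point of the disjoint sets `M` and `M - q` is such a position.
-/

open Finset

section Shifts

variable {G R : Type*} [AddCommGroup G] [Fintype G] [AddCommGroup R] [DecidableEq R]

def mismatches (α : R) (P T : G → R) : Finset G :=
  univ.filter fun j => α + P j ≠ T j

def shiftMismatches (q : G) (P T : G → R) : Finset G :=
  univ.filter fun j => P (j + q) - P j ≠ T (j + q) - T j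

theorem mem_shiftMismatches_of_not_iff {α : R} {P T : G → R} {j q : G}
    (h : ¬(j ∈ mismatches α P T ↔ j + q ∈ mismatches α P T)) :
    j ∈ shiftMismatches q P T := by
  simp only [mismatches, shiftMismatches, mem_filter, mem_univ, true_and] at *
  refine fun hPT => h ⟨fun hj hjq => hj ?_, fun hjq hj => hjq ?_⟩
  · linear_combination (norm := abel) hjq - hPT
  · linear_combination (norm := abel) hj + hPT

theorem two_mul_card_mismatches_le [DecidableEq G] {α : R} {P T : G → R} {q : G}
    (hq : ∀ j ∈ mismatches α P T, j + q ∉ mismatches α P T) :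
    2 * #(mismatches α P T) ≤ #(shiftMismatches q P T) := by
  set M := mismatches α P T
  have hdisj : Disjoint M (M.image (· - q)) := by
    refine disjoint_left.mpr fun a ha ha' => ?_
    obtain ⟨b, hb, rfl⟩ := mem_image.mp ha'
    exact hq _ ha (by rwa [sub_add_cancel])
  have hsub : M ∪ M.image (· - q) ⊆ shiftMismatches q P T := by
    intro j hj
    refine mem_shiftMismatches_of_not_iff (α := α) fun hiff => ?_
    rcases mem_union.mp hj with hj | hj
    · exact hq j hj (hiff.mp hj)
    · obtain ⟨b, hb, rfl⟩ := mem_image.mp hj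
      exact hq _ (hiff.mpr (by rwa [sub_add_cancel])) (by rwa [sub_add_cancel])
  calc 2 * #M = #(M ∪ M.image (· - q)) := by
        rw [card_union_of_disjoint hdisj, card_image_of_injective _ sub_left_injective, two_mul]
    _ ≤ _ := card_le_card hsub

theorem card_sub_le_card_filter_two_mul_card_mismatches_le [DecidableEq G] (α : R)
    (P T : G → R) :
    (Fintype.card G - 1) - (#(mismatches α P T) - 1) * #(mismatches α P T) ≤
      #((univ.erase 0).filter fun q => 2 * #(mismatches α P T) ≤ #(shiftMismatches q P T)) := by
  set M := mismatches α P T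
  set differences := M.offDiag.image fun p => p.2 - p.1
  have hgood : (univ.erase 0) \ differences ⊆
      (univ.erase 0).filter fun q => 2 * #M ≤ #(shiftMismatches q P T) := by
    intro q hq
    obtain ⟨hq0, hqd⟩ := mem_sdiff.mp hq
    refine mem_filter.mpr ⟨hq0, two_mul_card_mismatches_le fun j hj hjq => hqd ?_⟩
    refine mem_image.mpr ⟨(j, j + q), mem_offDiag.mpr ⟨hj, hjq, ?_⟩, add_sub_cancel_left j q⟩
    simpa using ne_of_mem_erase hq0
  calc (Fintype.card G - 1) - (#M - 1) * #M ≤ #(univ.erase 0) - #differences := by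
        have : #differences ≤ (#M - 1) * #M := by
          rw [Nat.sub_one_mul, ← offDiag_card]; exact card_image_le
        rw [card_erase_of_mem (mem_univ 0), card_univ]
        omega
    _ ≤ #((univ.erase 0) \ differences) := le_card_sdiff _ _
    _ ≤ _ := card_le_card hgood

end Shifts

/-- Case 1 of the tightness lemma: if the shift-normalised Hamming distance `h` satisfies
`k < h ≤ 2k` (with `m > 6k²`, `k ≥ 2`), then at least `(m-1) - (h-1)h` of the cyclic
permutations give permuted difference strings with at least `2h > 2k` mismatches. -/
theorem stmt_14 (m k : ℕ) (hm : 6 * k ^ 2 < m) (P T : Fin m → ℤ) (h : ℕ)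
    (hdef : h = sInf {c : ℕ | ∃ α : ℤ,
      c = (Finset.univ.filter (fun j : Fin m => α + P j ≠ T j)).card})
    (hlo : k < h) :
    (m - 1) - (h - 1) * h ≤
        ((Finset.Icc 1 (m - 1)).filter (fun q =>
          2 * h ≤ (Finset.univ.filter (fun j : Fin m =>
            P ⟨(j.1 + q) % m, Nat.mod_lt _ (by omega)⟩ - P j ≠
            T ⟨(j.1 + q) % m, Nat.mod_lt _ (by omega)⟩ - T j)).card)).card ∧
      2 * k < 2 * h := by
  have : NeZero m := ⟨by omega⟩
  refine ⟨?_, by omega⟩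
  obtain ⟨α, hα⟩ : ∃ α : ℤ, h = #(mismatches α P T) := by
    rw [hdef]; exact Nat.sInf_mem (s := {c | ∃ α : ℤ, c = #(mismatches α P T)}) ⟨_, 0, rfl⟩
  calc (m - 1) - (h - 1) * h
      = (Fintype.card (Fin m) - 1) - (#(mismatches α P T) - 1) * #(mismatches α P T) := by
        rw [Fintype.card_fin, hα]
    _ ≤ #((univ.erase 0).filter fun q => 2 * #(mismatches α P T) ≤ #(shiftMismatches q P T)) :=
        card_sub_le_card_filter_two_mul_card_mismatches_le α P T
    _ ≤ _ := by
        refine card_le_card_of_injOn Fin.val (fun q hq => ?_) Fin.val_injective.injOn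
        obtain ⟨hq0, hq⟩ := mem_filter.mp hq
        have hq_pos : 0 < q.val := Fin.pos_iff_ne_zero.mpr (ne_of_mem_erase hq0)
        -- `j + q` in `Fin m` unfolds to `⟨(j.1 + q.1) % m, _⟩`
        exact mem_filter.mpr ⟨mem_Icc.mpr ⟨hq_pos, by omega⟩, hα ▸ hq⟩
end
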